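/- With f_M as above, one has ‖f_M‖_{H^{-1/4}(𝕋³)} ≲ M^{-1/4}. Consequently ‖f_M‖_{𝒜} ≲ M^{-1/4}, where ‖u‖_{𝒜} = sup_{0<t≤1} t^{3/8} ‖p_t ∗ u‖_{L³(𝕋³)} and p_t is the heat kernel. -/

import Mathlib

open MeasureTheory

/-- Japanese bracket `⟨n⟩ = (1 + |n|²)^{1/2}` of a lattice point `n ∈ ℤ³`. -/
noncomputable def jb (n : Fin 3 → ℤ) : ℝ :=
  Real.sqrt (1 + ∑ i, (n i : ℝ) ^ 2)

/-- The normalized Lebesgue measure on the torus `𝕋³ = (ℝ/2πℤ)³`. -/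
noncomputable def torusMeasure : Measure (Fin 3 → ℝ) :=
  (ENNReal.ofReal ((2 * Real.pi) ^ (3 : ℕ)))⁻¹ •
    (volume.restrict (Set.univ.pi fun _ : Fin 3 => Set.Ioc 0 (2 * Real.pi)))

/-- The heat-regularized profile `p_t ∗ f_M`, where
`f_M(x) = M^{-3/2} Σ_n f̂(n/M) e^{in·x}` and `p_t` is the heat kernel on `𝕋³`. -/
noncomputable def heatfM (φ : EuclideanSpace ℝ (Fin 3) → ℝ) (M : ℕ) (t : ℝ)
    (x : Fin 3 → ℝ) : ℝ :=
  (M : ℝ) ^ (-(3 : ℝ) / 2) *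
    ∑' n : Fin 3 → ℤ,
      Real.exp (-t * ∑ i, (n i : ℝ) ^ 2) * φ (WithLp.toLp 2 (fun i => (n i : ℝ) / M)) *
        Real.cos (∑ i, (n i : ℝ) * x i)

namespace Stmt11Aux

open Real Complex

/-! ### One-dimensional Fourier integral -/

lemma oneD (k : ℤ) :
    ∫ x in Set.Ioc (0:ℝ) (2*π), Complex.exp ((k:ℂ) * x * Complex.I) =
      if k = 0 then ((2*π : ℝ) : ℂ) else 0 := by
  rw [← intervalIntegral.integral_of_le (by positivity : (0:ℝ) ≤ 2*π)]
  by_cases hk : k = 0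
  · simp [hk, Complex.ofReal_mul]
  · rw [if_neg hk]
    have hc : ((k:ℂ) * Complex.I) ≠ 0 := by
      simp [Complex.ext_iff, hk]
    have := integral_exp_mul_complex (a := (0:ℝ)) (b := 2*π) hc
    simp only [mul_comm ((k:ℂ) * Complex.I) _] at this
    rw [show (∫ x in (0:ℝ)..2*π, Complex.exp ((k:ℂ) * x * Complex.I)) = ∫ x in (0:ℝ)..2*π, Complex.exp ((x:ℂ) * ((k:ℂ) * Complex.I)) from intervalIntegral.integral_congr (fun x _ => by ring_nf), this]
    have h1 : Complex.exp (((2*π : ℝ):ℂ) * ((k:ℂ) * Complex.I)) = 1 := by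
      rw [show (((2*π : ℝ):ℂ) * ((k:ℂ) * Complex.I)) = (k:ℂ) * (2*(π:ℂ)*Complex.I) by push_cast; ring]
      exact Complex.exp_int_mul_two_pi_mul_I k
    push_cast at h1
    simp [h1]

noncomputable abbrev boxSet : Set (Fin 3 → ℝ) := Set.univ.pi fun _ : Fin 3 => Set.Ioc 0 (2 * Real.pi)

lemma boxMeasurable : MeasurableSet boxSet :=
  MeasurableSet.univ_pi fun _ => measurableSet_Ioc

lemma integral_cexp_box (k : Fin 3 → ℤ) :
    ∫ x in boxSet, (∏ i, Complex.exp ((k i : ℂ) * x i * Complex.I)) =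
      if k = 0 then (((2*π)^(3:ℕ) : ℝ) : ℂ) else 0 := by
  rw [← integral_indicator boxMeasurable]
  have hind : ∀ x : Fin 3 → ℝ,
      boxSet.indicator (fun x => ∏ i, Complex.exp ((k i : ℂ) * x i * Complex.I)) x =
      ∏ i, (Set.Ioc (0:ℝ) (2*π)).indicator (fun y => Complex.exp ((k i : ℂ) * y * Complex.I)) (x i) := by
    intro x
    by_cases hx : x ∈ boxSet
    · rw [Set.indicator_of_mem hx]
      exact (Finset.prod_congr rfl fun i _ =>
        (Set.indicator_of_mem (s := Set.Ioc (0:ℝ) (2*π)) (hx i (Set.mem_univ i)) (fun y => Complex.exp ((k i : ℂ) * y * Complex.I))).symm)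
    · rw [Set.indicator_of_notMem hx]
      have hx' : ∃ i, x i ∉ Set.Ioc (0:ℝ) (2*π) := by simpa [Set.mem_pi] using hx
      obtain ⟨i, hi⟩ := hx'
      exact (Finset.prod_eq_zero (Finset.mem_univ i)
        (Set.indicator_of_notMem hi _)).symm
  simp_rw [hind]
  rw [volume_pi, MeasureTheory.integral_fintype_prod_eq_prod
    (f := fun i y => (Set.Ioc (0:ℝ) (2*π)).indicator (fun y => Complex.exp ((k i : ℂ) * y * Complex.I)) y)]
  have : ∀ i : Fin 3, (∫ y : ℝ, (Set.Ioc (0:ℝ) (2*π)).indicator (fun y => Complex.exp ((k i : ℂ) * y * Complex.I)) y)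
      = if k i = 0 then ((2*π : ℝ) : ℂ) else 0 := fun i => by
    rw [integral_indicator measurableSet_Ioc]; exact oneD (k i)
  simp_rw [this]
  by_cases hk : k = 0
  · subst hk
    simp only [Pi.zero_apply, if_pos rfl, Finset.prod_const, Finset.card_univ, Fintype.card_fin]
    push_cast; ring
  · rw [if_neg hk]
    obtain ⟨i, hi⟩ := Function.ne_iff.mp hk
    have hi' : k i ≠ 0 := hi
    exact Finset.prod_eq_zero (Finset.mem_univ i) (by simp [hi'])

instance : IsFiniteMeasure (volume.restrict boxSet) := by
  constructor
  rw [Measure.restrict_apply_univ, boxSet, volume_pi_pi]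
  simp only [Real.volume_Ioc]
  rw [Finset.prod_const]
  exact ENNReal.pow_lt_top ENNReal.ofReal_lt_top

lemma integrable_cexp_box (k : Fin 3 → ℤ) :
    Integrable (fun x : Fin 3 → ℝ => ∏ i, Complex.exp ((k i : ℂ) * x i * Complex.I))
      (volume.restrict boxSet) := by
  apply Integrable.mono' (integrable_const (1:ℝ))
  · apply Continuous.aestronglyMeasurable
    apply continuous_finset_prod
    intro i _
    exact Complex.continuous_exp.comp (by fun_prop)
  · refine Filter.Eventually.of_forall fun x => ?_
    rw [norm_prod]
    calc ∏ i, ‖Complex.exp ((k i : ℂ) * x i * Complex.I)‖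
        = ∏ i : Fin 3, (1:ℝ) := by
          refine Finset.prod_congr rfl fun i _ => ?_
          rw [show ((k i : ℂ) * x i * Complex.I) = ((((k i : ℝ) * x i : ℝ)):ℂ) * Complex.I by push_cast; ring]
          exact Complex.norm_exp_ofReal_mul_I _
      _ ≤ 1 := by simp

lemma integral_cos_torus (k : Fin 3 → ℤ) :
    ∫ x, Real.cos (∑ i, (k i : ℝ) * x i) ∂torusMeasure = if k = 0 then 1 else 0 := by
  rw [torusMeasure, integral_smul_measure]
  have hre : ∀ x : Fin 3 → ℝ, Real.cos (∑ i, (k i : ℝ) * x i)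
      = (∏ i, Complex.exp ((k i : ℂ) * x i * Complex.I)).re := by
    intro x
    rw [← Complex.exp_sum]
    rw [show (∑ i, (k i : ℂ) * (x i : ℂ) * Complex.I) = ((∑ i, (k i : ℝ) * x i : ℝ) : ℂ) * Complex.I by
      push_cast; rw [Finset.sum_mul]]
    exact (Complex.exp_ofReal_mul_I_re _).symm
  simp_rw [hre]
  rw [← RCLike.re_eq_complex_re, integral_re (integrable_cexp_box k), RCLike.re_eq_complex_re]
  rw [show (∫ x in boxSet, ∏ i, Complex.exp ((k i : ℂ) * x i * Complex.I)) = _ from integral_cexp_box k]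
  have hπ : ((ENNReal.ofReal ((2 * Real.pi) ^ (3:ℕ)))⁻¹).toReal = ((2 * Real.pi) ^ (3:ℕ))⁻¹ := by
    rw [ENNReal.toReal_inv, ENNReal.toReal_ofReal (by positivity)]
  rw [hπ]
  by_cases hk : k = 0
  · rw [if_pos hk, if_pos hk]
    simp only [Complex.ofReal_re, smul_eq_mul]
    rw [inv_mul_cancel₀ (by positivity)]
  · simp [hk]

instance : IsFiniteMeasure torusMeasure := by
  constructor
  rw [torusMeasure, Measure.smul_apply, smul_eq_mul]
  exact ENNReal.mul_lt_top (ENNReal.inv_lt_top.mpr (by positivity)) (measure_lt_top _ _)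

lemma integrable_torus {f : (Fin 3 → ℝ) → ℝ} (hf : Continuous f) (C : ℝ)
    (hC : ∀ x, |f x| ≤ C) : Integrable f torusMeasure :=
  Integrable.mono' (integrable_const C) hf.aestronglyMeasurable
    (Filter.Eventually.of_forall fun x => by simpa using hC x)

lemma integrable_cosk (k : Fin 3 → ℤ) :
    Integrable (fun x : Fin 3 → ℝ => Real.cos (∑ i, (k i : ℝ) * x i)) torusMeasure :=
  integrable_torus (by fun_prop) 1 (fun x => Real.abs_cos_le_one _)

lemma integrable_coscos (n m : Fin 3 → ℤ) :
    Integrable (fun x : Fin 3 → ℝ =>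
      Real.cos (∑ i, (n i : ℝ) * x i) * Real.cos (∑ i, (m i : ℝ) * x i)) torusMeasure := by
  refine integrable_torus (by fun_prop) 1 (fun x => ?_)
  rw [abs_mul]
  exact mul_le_one₀ (Real.abs_cos_le_one _) (abs_nonneg _) (Real.abs_cos_le_one _)

lemma integral_cos_mul_cos (n m : Fin 3 → ℤ) :
    ∫ x, Real.cos (∑ i, (n i : ℝ) * x i) * Real.cos (∑ i, (m i : ℝ) * x i) ∂torusMeasure
      = ((if n = m then 1 else 0) + (if n = -m then 1 else 0)) / 2 := by
  have key : ∀ x : Fin 3 → ℝ,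
      Real.cos (∑ i, (n i : ℝ) * x i) * Real.cos (∑ i, (m i : ℝ) * x i)
        = (Real.cos (∑ i, ((n - m) i : ℝ) * x i) + Real.cos (∑ i, ((n + m) i : ℝ) * x i)) / 2 := by
    intro x
    have h1 : (∑ i, ((n - m) i : ℝ) * x i)
        = (∑ i, (n i : ℝ) * x i) - (∑ i, (m i : ℝ) * x i) := by
      rw [← Finset.sum_sub_distrib]
      refine Finset.sum_congr rfl fun i _ => ?_
      simp [sub_mul]
    have h2 : (∑ i, ((n + m) i : ℝ) * x i)
        = (∑ i, (n i : ℝ) * x i) + (∑ i, (m i : ℝ) * x i) := by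
      rw [← Finset.sum_add_distrib]
      refine Finset.sum_congr rfl fun i _ => ?_
      simp [add_mul]
    rw [h1, h2, Real.cos_sub, Real.cos_add]
    ring
  simp_rw [key]
  rw [integral_div, integral_add (integrable_cosk _) (integrable_cosk _),
    integral_cos_torus, integral_cos_torus]
  congr 2
  · simp [sub_eq_zero]
  · simp [add_eq_zero_iff_eq_neg]

/-! ### Elementary bounds -/

lemma sbound {s : ℝ} (hs : 0 < s) : s ^ ((3:ℝ)/8) * Real.exp (-s/4) ≤ 4 := by
  rcases le_or_gt s 1 with h1 | h1
  · have ha : s ^ ((3:ℝ)/8) ≤ 1 := Real.rpow_le_one hs.le h1 (by norm_num)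
    have hb : Real.exp (-s/4) ≤ 1 := Real.exp_le_one_iff.mpr (by linarith)
    nlinarith [Real.exp_pos (-s/4), Real.rpow_nonneg hs.le ((3:ℝ)/8)]
  · have ha : s ^ ((3:ℝ)/8) ≤ s := by
      calc s ^ ((3:ℝ)/8) ≤ s ^ (1:ℝ) :=
        Real.rpow_le_rpow_of_exponent_le h1.le (by norm_num)
      _ = s := Real.rpow_one s
    have hb : Real.exp (-s/4) ≤ 4 / s := by
      have h2 : s/4 ≤ Real.exp (s/4) := by
        have := Real.add_one_le_exp (s/4)
        linarith
      rw [show (-s/4 : ℝ) = -(s/4) by ring, Real.exp_neg]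
      rw [inv_eq_one_div, div_le_div_iff₀ (Real.exp_pos _) hs]
      nlinarith [Real.exp_pos (s/4)]
    calc s ^ ((3:ℝ)/8) * Real.exp (-s/4) ≤ s * (4/s) :=
      mul_le_mul ha hb (Real.exp_pos _).le hs.le
    _ = 4 := by field_simp

lemma coord_abs_le (ξ : EuclideanSpace ℝ (Fin 3)) (i : Fin 3) : |ξ i| ≤ ‖ξ‖ := by
  rw [EuclideanSpace.norm_eq]
  have h1 : |ξ i| = Real.sqrt (‖ξ i‖^2) := by
    rw [Real.sqrt_sq_eq_abs, Real.norm_eq_abs, _root_.abs_abs]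
  rw [h1]
  exact Real.sqrt_le_sqrt (Finset.single_le_sum (f := fun j => ‖ξ j‖^2)
    (fun j _ => by positivity) (Finset.mem_univ i))

end Stmt11Aux

set_option maxHeartbeats 2000000 in
open Stmt11Aux in
/-- `‖f_M‖_{H^{-1/4}} ≲ M^{-1/4}`, and consequently `‖f_M‖_𝒜 ≲ M^{-1/4}` where
`‖u‖_𝒜 = sup_{0<t≤1} t^{3/8} ‖p_t ∗ u‖_{L³(𝕋³)}`.  Here the `H^{-1/4}` norm is computed
in Fourier variables: the `n`-th Fourier coefficient of `f_M` is `M^{-3/2} f̂(n/M)`. -/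
theorem stmt11 (φ : EuclideanSpace ℝ (Fin 3) → ℝ)
    (hsmooth : ContDiff ℝ (⊤ : ℕ∞) φ)
    (hnonneg : ∀ ξ, 0 ≤ φ ξ)
    (hradial : ∀ ξ η : EuclideanSpace ℝ (Fin 3), ‖ξ‖ = ‖η‖ → φ ξ = φ η)
    (hsupp : ∀ ξ : EuclideanSpace ℝ (Fin 3), φ ξ ≠ 0 → 1 / 2 < ‖ξ‖ ∧ ‖ξ‖ ≤ 1)
    (hnorm : (∫ ξ, (φ ξ) ^ 2) = 1) :
    ∃ C : ℝ, 0 < C ∧ ∀ M : ℕ, 1 ≤ M →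
      ((∑' n : Fin 3 → ℤ,
          jb n ^ (-(1 : ℝ) / 2) *
            ((M : ℝ) ^ (-(3 : ℝ) / 2) * φ (WithLp.toLp 2 (fun i => (n i : ℝ) / M))) ^ 2) ^ ((1 : ℝ) / 2)
        ≤ C * (M : ℝ) ^ (-(1 : ℝ) / 4)) ∧
      ∀ t ∈ Set.Ioc (0 : ℝ) 1,
        t ^ ((3 : ℝ) / 8) * (∫ x, |heatfM φ M t x| ^ 3 ∂torusMeasure) ^ ((1 : ℝ) / 3)
          ≤ C * (M : ℝ) ^ (-(1 : ℝ) / 4) := by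
  classical
  obtain ⟨B0, hB0⟩ := (isCompact_closedBall (0 : EuclideanSpace ℝ (Fin 3)) 1).exists_bound_of_continuousOn hsmooth.continuous.continuousOn
  set B : ℝ := max B0 0 with hBdef
  have hBnn : 0 ≤ B := le_max_right _ _
  have hB : ∀ ξ, φ ξ ≤ B := by
    intro ξ
    by_cases h : ‖ξ‖ ≤ 1
    · have hmem : ξ ∈ Metric.closedBall (0 : EuclideanSpace ℝ (Fin 3)) 1 := by
        simpa [Metric.mem_closedBall, dist_zero_right] using h
      calc φ ξ ≤ |φ ξ| := le_abs_self _
        _ = ‖φ ξ‖ := (Real.norm_eq_abs _).symm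
        _ ≤ B0 := hB0 ξ hmem
        _ ≤ B := le_max_left _ _
    · have hz : φ ξ = 0 := by
        by_contra hne
        exact h (hsupp ξ hne).2
      rw [hz]; exact hBnn
  refine ⟨36 * (B + 1), by positivity, ?_⟩
  intro M hM
  have hM0 : (0:ℝ) < M := by exact_mod_cast Nat.lt_of_lt_of_le Nat.zero_lt_one hM
  have hM1 : (1:ℝ) ≤ M := by exact_mod_cast hM
  set S : Finset (Fin 3 → ℤ) := Finset.Icc (fun _ => -(M:ℤ)) (fun _ => (M:ℤ)) with hS
  have hvan : ∀ n : Fin 3 → ℤ, n ∉ S → φ (WithLp.toLp 2 (fun i => (n i : ℝ) / M)) = 0 := by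
    intro n hn
    by_contra hne
    have hle := (hsupp _ hne).2
    have hex : ∃ i, ¬((-(M:ℤ) ≤ n i) ∧ n i ≤ M) := by
      by_contra hc
      push_neg at hc
      exact hn (Finset.mem_Icc.mpr ⟨fun i => (hc i).1, fun i => (hc i).2⟩)
    obtain ⟨i, hi⟩ := hex
    have habs : (M:ℤ) < |n i| := by
      rcases not_and_or.mp hi with h | h <;> push_neg at h <;>
        rcases abs_cases (n i) with ⟨he, _⟩ | ⟨he, _⟩ <;> omega
    have habsR : (M:ℝ) < |(n i : ℝ)| := by
      have : ((M:ℤ):ℝ) < ((|n i| : ℤ) : ℝ) := by exact_mod_cast habs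
      simpa [Int.cast_abs] using this
    have hco : |(n i : ℝ) / (M:ℝ)| ≤ 1 := le_trans (coord_abs_le (WithLp.toLp 2 (fun j => (n j : ℝ) / (M:ℝ))) i) hle
    have hgt : (1:ℝ) < |(n i : ℝ) / (M:ℝ)| := by
      rw [abs_div, abs_of_pos hM0, lt_div_iff₀ hM0]
      linarith
    linarith
  have hlow : ∀ n : Fin 3 → ℤ, φ (WithLp.toLp 2 (fun i => (n i : ℝ) / M)) ≠ 0 →
      (M:ℝ)^2 < 4 * ∑ i, (n i : ℝ)^2 := by
    intro n hne
    have h12 := (hsupp _ hne).1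
    have h12' : (1:ℝ)/2 < Real.sqrt (∑ i, ((n i : ℝ)/(M:ℝ))^2) := by
      refine lt_of_lt_of_le h12 (le_of_eq ?_)
      rw [EuclideanSpace.norm_eq]
      refine congrArg Real.sqrt (Finset.sum_congr rfl fun i _ => ?_)
      simp [Real.norm_eq_abs, abs_div, div_pow, sq_abs]
    have h14 : ((1:ℝ)/2)^2 < ∑ i, ((n i : ℝ)/(M:ℝ))^2 := (Real.lt_sqrt (by norm_num)).mp h12'
    have hsum : ∑ i, ((n i : ℝ)/(M:ℝ))^2 = (∑ i, (n i : ℝ)^2) / (M:ℝ)^2 := by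
      rw [Finset.sum_div]
      exact Finset.sum_congr rfl fun i _ => by rw [div_pow]
    rw [hsum, lt_div_iff₀ (by positivity : (0:ℝ) < (M:ℝ)^2)] at h14
    nlinarith
  have hcard : (S.card : ℝ) ≤ 27 * (M:ℝ)^(3:ℕ) := by
    have hc1 : S.card = (2*M+1)^3 := by
      rw [hS, Pi.card_Icc]
      have h2 : (Finset.Icc (-(M:ℤ)) (M:ℤ)).card = 2*M+1 := by
        rw [Int.card_Icc]; omega
      simp only [Finset.prod_const, Finset.card_univ, Fintype.card_fin, h2]
    rw [hc1]
    push_cast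
    nlinarith [mul_nonneg (mul_nonneg (sub_nonneg.mpr hM1) hM0.le) hM0.le,
      mul_nonneg (sub_nonneg.mpr hM1) hM0.le, sub_nonneg.mpr hM1]
  constructor
  · -- H^{-1/4} bound
    set c : ℝ := 2 * (M:ℝ)^(-(1:ℝ)/2) * ((M:ℝ)^(-(3:ℝ)/2))^2 * B^2 with hc
    have hc0 : 0 ≤ c := by positivity
    have hterm : ∀ n ∈ S,
        jb n ^ (-(1:ℝ)/2) * ((M:ℝ)^(-(3:ℝ)/2) * φ (WithLp.toLp 2 (fun i => (n i : ℝ)/M)))^2 ≤ c := by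
      intro n _
      by_cases hφ : φ (WithLp.toLp 2 (fun i => (n i : ℝ)/M)) = 0
      · rw [hφ]; simpa using hc0
      · have hlo := hlow n hφ
        have hjb : (M:ℝ)/2 ≤ jb n := by
          simp only [jb]
          have h1 : ((M:ℝ)/2)^2 ≤ 1 + ∑ i, (n i : ℝ)^2 := by nlinarith
          calc (M:ℝ)/2 = Real.sqrt (((M:ℝ)/2)^2) := (Real.sqrt_sq (by positivity)).symm
            _ ≤ _ := Real.sqrt_le_sqrt h1
        have hjb2 : jb n ^ (-(1:ℝ)/2) ≤ ((M:ℝ)/2) ^ (-(1:ℝ)/2) :=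
          Real.rpow_le_rpow_of_nonpos (by positivity) hjb (by norm_num)
        have hhalf : ((M:ℝ)/2) ^ (-(1:ℝ)/2) ≤ 2 * (M:ℝ)^(-(1:ℝ)/2) := by
          rw [div_eq_mul_inv, Real.mul_rpow hM0.le (by norm_num),
            Real.inv_rpow (by norm_num), ← Real.rpow_neg (by norm_num)]
          have h2 : (2:ℝ) ^ (-(-(1:ℝ)/2)) ≤ 2 := by
            calc (2:ℝ) ^ (-(-(1:ℝ)/2)) ≤ (2:ℝ) ^ (1:ℝ) :=
              Real.rpow_le_rpow_of_exponent_le one_le_two (by norm_num)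
            _ = 2 := Real.rpow_one 2
          nlinarith [Real.rpow_nonneg hM0.le (-(1:ℝ)/2),
            Real.rpow_nonneg (by norm_num : (0:ℝ) ≤ 2) (-(-(1:ℝ)/2))]
        have hsq : ((M:ℝ)^(-(3:ℝ)/2) * φ (WithLp.toLp 2 (fun i => (n i : ℝ)/M)))^2
            ≤ ((M:ℝ)^(-(3:ℝ)/2))^2 * B^2 := by
          rw [mul_pow]
          have hφB : (φ (WithLp.toLp 2 (fun i => (n i : ℝ)/M)))^2 ≤ B^2 := by
            nlinarith [hnonneg (WithLp.toLp 2 (fun i => (n i : ℝ)/M)), hB (WithLp.toLp 2 (fun i => (n i : ℝ)/M))]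
          exact mul_le_mul_of_nonneg_left hφB (sq_nonneg _)
        calc jb n ^ (-(1:ℝ)/2) * ((M:ℝ)^(-(3:ℝ)/2) * φ (WithLp.toLp 2 (fun i => (n i : ℝ)/M)))^2
            ≤ (2 * (M:ℝ)^(-(1:ℝ)/2)) * (((M:ℝ)^(-(3:ℝ)/2))^2 * B^2) :=
              mul_le_mul (hjb2.trans hhalf) hsq (sq_nonneg _) (by positivity)
          _ = c := by rw [hc]; ring
    have hsum0 : (∑' n : Fin 3 → ℤ,
        jb n ^ (-(1:ℝ)/2) * ((M:ℝ)^(-(3:ℝ)/2) * φ (WithLp.toLp 2 (fun i => (n i : ℝ)/M)))^2)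
        = ∑ n ∈ S, jb n ^ (-(1:ℝ)/2) * ((M:ℝ)^(-(3:ℝ)/2) * φ (WithLp.toLp 2 (fun i => (n i : ℝ)/M)))^2 :=
      tsum_eq_sum (fun n hn => by rw [hvan n hn]; simp)
    rw [hsum0]
    have h1 := Finset.sum_le_card_nsmul S _ c hterm
    rw [nsmul_eq_mul] at h1
    have h2 : (S.card : ℝ) * c ≤ 27 * (M:ℝ)^(3:ℕ) * c := mul_le_mul_of_nonneg_right hcard hc0
    have h3 : 27 * (M:ℝ)^(3:ℕ) * c ≤ (36*(B+1))^2 * (M:ℝ)^(-(1:ℝ)/2) := by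
      rw [hc]
      have hpow : (M:ℝ)^(3:ℕ) * ((M:ℝ)^(-(1:ℝ)/2) * ((M:ℝ)^(-(3:ℝ)/2))^2) = (M:ℝ)^(-(1:ℝ)/2) := by
        rw [← Real.rpow_natCast ((M:ℝ)^(-(3:ℝ)/2)) 2, ← Real.rpow_mul hM0.le,
          ← Real.rpow_natCast (M:ℝ) 3, ← Real.rpow_add hM0, ← Real.rpow_add hM0]
        norm_num
      calc 27 * (M:ℝ)^(3:ℕ) * (2 * (M:ℝ)^(-(1:ℝ)/2) * ((M:ℝ)^(-(3:ℝ)/2))^2 * B^2)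
          = 54 * B^2 * ((M:ℝ)^(3:ℕ) * ((M:ℝ)^(-(1:ℝ)/2) * ((M:ℝ)^(-(3:ℝ)/2))^2)) := by ring
        _ = 54 * B^2 * (M:ℝ)^(-(1:ℝ)/2) := by rw [hpow]
        _ ≤ (36*(B+1))^2 * (M:ℝ)^(-(1:ℝ)/2) := by
            have hnum : 54*B^2 ≤ (36*(B+1))^2 := by nlinarith
            exact mul_le_mul_of_nonneg_right hnum (Real.rpow_nonneg hM0.le _)
    have hX : (∑ n ∈ S, jb n ^ (-(1:ℝ)/2) * ((M:ℝ)^(-(3:ℝ)/2) * φ (WithLp.toLp 2 (fun i => (n i : ℝ)/M)))^2)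
        ≤ (36*(B+1))^2 * (M:ℝ)^(-(1:ℝ)/2) := le_trans h1 (le_trans h2 h3)
    have hXnn : 0 ≤ ∑ n ∈ S, jb n ^ (-(1:ℝ)/2) * ((M:ℝ)^(-(3:ℝ)/2) * φ (WithLp.toLp 2 (fun i => (n i : ℝ)/M)))^2 :=
      Finset.sum_nonneg fun n _ => mul_nonneg (Real.rpow_nonneg (Real.sqrt_nonneg _) _) (sq_nonneg _)
    have h4 := Real.rpow_le_rpow hXnn hX (by norm_num : (0:ℝ) ≤ 1/2)
    refine h4.trans (le_of_eq ?_)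
    rw [Real.mul_rpow (by positivity) (Real.rpow_nonneg hM0.le _),
      ← Real.rpow_natCast (36*(B+1)) 2, ← Real.rpow_mul (by positivity),
      ← Real.rpow_mul hM0.le]
    norm_num
  · -- the 𝒜 bound
    intro t ht
    obtain ⟨ht0, ht1⟩ := ht
    set a : (Fin 3 → ℤ) → ℝ := fun n =>
      (M:ℝ)^(-(3:ℝ)/2) * (Real.exp (-t * ∑ i, (n i : ℝ)^2) * φ (WithLp.toLp 2 (fun i => (n i : ℝ)/M))) with ha
    set g : (Fin 3 → ℝ) → ℝ := fun x => ∑ n ∈ S, a n * Real.cos (∑ i, (n i : ℝ) * x i) with hg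
    have hhg : ∀ x, heatfM φ M t x = g x := by
      intro x
      simp only [hg, ha, heatfM]
      rw [tsum_eq_sum (s := S) (fun n hn => by rw [hvan n hn]; ring), Finset.mul_sum]
      exact Finset.sum_congr rfl fun n _ => by ring
    have hgcont : Continuous g := by
      simp only [hg]
      exact continuous_finset_sum _ fun n _ => continuous_const.mul
        (Real.continuous_cos.comp (continuous_finset_sum _ fun i _ =>
          continuous_const.mul (continuous_apply i)))
    set E : ℝ := Real.exp (-(t * (M:ℝ)^2)/4) with hE
    have hE0 : 0 < E := Real.exp_pos _
    set β : ℝ := (M:ℝ)^(-(3:ℝ)/2) * E * B with hβ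
    have hβ0 : 0 ≤ β := by positivity
    have hab : ∀ n, 0 ≤ a n ∧ a n ≤ β := by
      intro n
      refine ⟨mul_nonneg (Real.rpow_nonneg hM0.le _)
        (mul_nonneg (Real.exp_pos _).le (hnonneg _)), ?_⟩
      by_cases hφ : φ (WithLp.toLp 2 (fun i => (n i : ℝ)/M)) = 0
      · simp only [ha, hφ, mul_zero]; exact hβ0
      · have hlo := hlow n hφ
        have hexp : Real.exp (-t * ∑ i, (n i : ℝ)^2) ≤ E := by
          rw [hE]
          apply Real.exp_le_exp.mpr
          have h5 : t * ((M:ℝ)^2/4) ≤ t * ∑ i, (n i : ℝ)^2 :=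
            mul_le_mul_of_nonneg_left (by linarith) ht0.le
          nlinarith
        simp only [ha, hβ]
        calc (M:ℝ)^(-(3:ℝ)/2) * (Real.exp (-t * ∑ i, (n i : ℝ)^2) * φ (WithLp.toLp 2 (fun i => (n i : ℝ)/M)))
            ≤ (M:ℝ)^(-(3:ℝ)/2) * (E * B) := by
              apply mul_le_mul_of_nonneg_left _ (Real.rpow_nonneg hM0.le _)
              exact mul_le_mul hexp (hB _) (hnonneg _) hE0.le
          _ = (M:ℝ)^(-(3:ℝ)/2) * E * B := by ring
    set K : ℝ := 27 * (M:ℝ)^(3:ℕ) * β with hK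
    have hK0 : 0 ≤ K := by positivity
    have hsup : ∀ x, |g x| ≤ K := by
      intro x
      calc |g x| ≤ ∑ n ∈ S, |a n * Real.cos (∑ i, (n i : ℝ) * x i)| := by
            simp only [hg]; exact Finset.abs_sum_le_sum_abs _ _
        _ ≤ ∑ n ∈ S, β := by
            refine Finset.sum_le_sum fun n _ => ?_
            rw [abs_mul]
            have h6 : |a n| ≤ β := by rw [abs_of_nonneg (hab n).1]; exact (hab n).2
            have h7 := mul_le_mul h6 (Real.abs_cos_le_one (∑ i, (n i : ℝ) * x i)) (abs_nonneg _) hβ0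
            linarith [h7]
        _ = S.card • β := Finset.sum_const β
        _ = (S.card : ℝ) * β := nsmul_eq_mul _ _
        _ ≤ K := by rw [hK]; exact mul_le_mul_of_nonneg_right hcard hβ0
    have haneg : ∀ n : Fin 3 → ℤ, a (-n) = a n := by
      intro n
      simp only [ha]
      have h1 : (∑ i, ((-n) i : ℝ)^2) = ∑ i, (n i : ℝ)^2 :=
        Finset.sum_congr rfl fun i _ => by simp only [Pi.neg_apply]; push_cast; ring
      have h2 : φ (WithLp.toLp 2 (fun i => ((-n) i : ℝ)/M)) = φ (WithLp.toLp 2 (fun i => (n i : ℝ)/M)) := by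
        apply hradial
        rw [EuclideanSpace.norm_eq, EuclideanSpace.norm_eq]
        refine congrArg Real.sqrt (Finset.sum_congr rfl fun i _ => ?_)
        simp only [Real.norm_eq_abs, Pi.neg_apply, WithLp.ofLp_toLp]
        push_cast
        rw [neg_div, abs_neg]
      rw [h1, h2]
    have hSneg : ∀ n ∈ S, -n ∈ S := by
      intro n hn
      rw [hS, Finset.mem_Icc] at hn ⊢
      constructor
      · exact fun i => by have h1 := hn.2 i; simp only [Pi.neg_apply] at *; omega
      · exact fun i => by have h1 := hn.1 i; simp only [Pi.neg_apply] at *; omega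
    have hL2 : ∫ x, g x ^ 2 ∂torusMeasure = ∑ n ∈ S, a n ^ 2 := by
      have hexp2 : ∀ x, g x ^ 2 = ∑ n ∈ S, ∑ m ∈ S,
          (a n * a m) * (Real.cos (∑ i, (n i : ℝ) * x i) * Real.cos (∑ i, (m i : ℝ) * x i)) := by
        intro x
        simp only [hg]
        rw [sq, Finset.sum_mul_sum]
        exact Finset.sum_congr rfl fun n _ => Finset.sum_congr rfl fun m _ => by ring
      simp_rw [hexp2]
      rw [integral_finset_sum S (fun n _ =>
        integrable_finset_sum S (fun m _ => (integrable_coscos n m).const_mul _))]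
      have hin : ∀ n ∈ S, (∫ x, ∑ m ∈ S, (a n * a m) *
            (Real.cos (∑ i, (n i : ℝ) * x i) * Real.cos (∑ i, (m i : ℝ) * x i)) ∂torusMeasure)
          = ∑ m ∈ S, (a n * a m) * (((if n = m then 1 else 0) + (if n = -m then 1 else 0))/2) := by
        intro n _
        rw [integral_finset_sum S (fun m _ => (integrable_coscos n m).const_mul _)]
        exact Finset.sum_congr rfl fun m _ => by
          rw [integral_const_mul, integral_cos_mul_cos]
      rw [Finset.sum_congr rfl hin]
      have hinner : ∀ n ∈ S, ∑ m ∈ S,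
          (a n * a m) * (((if n = m then 1 else 0) + (if n = -m then 1 else 0))/2)
          = a n * a n / 2 + a n * a (-n) / 2 := by
        intro n hn
        have hiff : ∀ m : Fin 3 → ℤ, (n = -m) ↔ (m = -n) := by
          intro m
          constructor
          · intro h; subst h; simp
          · intro h; subst h; simp
        have hsplit : ∀ m : Fin 3 → ℤ,
            (a n * a m) * (((if n = m then 1 else 0) + (if n = -m then 1 else 0))/2)
            = (if m = n then a n * a n / 2 else 0) + (if m = -n then a n * a (-n) / 2 else 0) := by
          intro m
          by_cases h1 : m = n <;> by_cases h2 : m = -n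
          · subst h1
            rw [if_pos rfl, if_pos rfl, if_pos h2, if_pos h2, ← h2]
            ring
          · subst h1
            rw [if_pos rfl, if_pos rfl, if_neg h2, if_neg h2]
            ring
          · rw [if_neg (fun h => h1 h.symm), if_pos ((hiff m).mpr h2), if_neg h1, if_pos h2, h2]
            ring
          · rw [if_neg (fun h => h1 h.symm), if_neg (fun h => h2 ((hiff m).mp h)),
              if_neg h1, if_neg h2]
            ring
        rw [Finset.sum_congr rfl (fun m _ => hsplit m), Finset.sum_add_distrib,
          Finset.sum_ite_eq' S n (fun m => a n * a n / 2),
          Finset.sum_ite_eq' S (-n) (fun m => a n * a (-n) / 2),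
          if_pos hn, if_pos (hSneg n hn)]
      rw [Finset.sum_congr rfl hinner]
      exact Finset.sum_congr rfl fun n _ => by rw [haneg n]; ring
    have hL2le : ∑ n ∈ S, a n ^ 2 ≤ 27 * (M:ℝ)^(3:ℕ) * β^2 := by
      have h1 := Finset.sum_le_card_nsmul S (fun n => a n ^ 2) (β^2)
        (fun n _ => pow_le_pow_left₀ (hab n).1 (hab n).2 2)
      rw [nsmul_eq_mul] at h1
      exact h1.trans (mul_le_mul_of_nonneg_right hcard (sq_nonneg β))
    have hint2 : Integrable (fun x => g x ^ 2) torusMeasure := by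
      refine integrable_torus (hgcont.pow 2) (K^2) (fun x => ?_)
      rw [abs_of_nonneg (sq_nonneg _), ← sq_abs]
      exact pow_le_pow_left₀ (abs_nonneg _) (hsup x) 2
    have hint3 : Integrable (fun x => |g x| ^ 3) torusMeasure := by
      refine integrable_torus (hgcont.abs.pow 3) (K^3) (fun x => ?_)
      rw [abs_of_nonneg (by positivity)]
      exact pow_le_pow_left₀ (abs_nonneg _) (hsup x) 3
    have hcube : ∫ x, |heatfM φ M t x| ^ 3 ∂torusMeasure ≤ K * ∑ n ∈ S, a n ^ 2 := by
      have hpt : ∀ x, |g x| ^ 3 ≤ K * g x ^ 2 := by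
        intro x
        have h1 : |g x|^3 = |g x| * |g x|^2 := by ring
        rw [h1, sq_abs]
        exact mul_le_mul_of_nonneg_right (hsup x) (sq_nonneg _)
      calc ∫ x, |heatfM φ M t x| ^ 3 ∂torusMeasure
          = ∫ x, |g x| ^ 3 ∂torusMeasure := by simp_rw [hhg]
        _ ≤ ∫ x, K * g x ^ 2 ∂torusMeasure :=
            integral_mono hint3 (hint2.const_mul K) (fun x => hpt x)
        _ = K * ∫ x, g x ^ 2 ∂torusMeasure := integral_const_mul K _
        _ = K * ∑ n ∈ S, a n ^ 2 := by rw [hL2]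
    set D : ℝ := 36*(B+1) * (M:ℝ)^(-(1:ℝ)/4) * t^(-(3:ℝ)/8) with hD
    have hD0 : 0 ≤ D := mul_nonneg (mul_nonneg (by positivity)
      (Real.rpow_nonneg hM0.le _)) (Real.rpow_nonneg ht0.le _)
    have hkey : t^((3:ℝ)/8) * (M:ℝ)^((3:ℝ)/4) * E ≤ 4 := by
      have hs : 0 < t * (M:ℝ)^2 := by positivity
      have hsb := sbound hs
      have hmul : (t * (M:ℝ)^2) ^ ((3:ℝ)/8) = t^((3:ℝ)/8) * (M:ℝ)^((3:ℝ)/4) := by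
        rw [Real.mul_rpow ht0.le (by positivity), ← Real.rpow_natCast (M:ℝ) 2,
          ← Real.rpow_mul hM0.le]
        norm_num
      rw [hmul] at hsb
      rw [hE]
      exact hsb
    have em : ((M:ℝ)^(3:ℕ))^2 * ((M:ℝ)^(-(3:ℝ)/2))^3 = (M:ℝ)^((3:ℝ)/2) := by
      rw [← pow_mul, ← Real.rpow_natCast ((M:ℝ)^(-(3:ℝ)/2)) 3, ← Real.rpow_mul hM0.le,
        ← Real.rpow_natCast (M:ℝ) (3*2), ← Real.rpow_add hM0]
      norm_num
    have h1 : K * (27 * (M:ℝ)^(3:ℕ) * β^2) = 729*B^3*(M:ℝ)^((3:ℝ)/2)*E^3 := by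
      rw [hK, hβ, ← em]; ring
    have hfinal : 729 * B^3 * (M:ℝ)^((3:ℝ)/2) * E^3 ≤ D^3 := by
      have hpos : (0:ℝ) < (M:ℝ)^((3:ℝ)/4) * t^((9:ℝ)/8) :=
        mul_pos (Real.rpow_pos_of_pos hM0 _) (Real.rpow_pos_of_pos ht0 _)
      rw [← mul_le_mul_iff_of_pos_right hpos]
      have hR : D^3 * ((M:ℝ)^((3:ℝ)/4) * t^((9:ℝ)/8)) = (36*(B+1))^3 := by
        rw [hD]
        have e2 : ((M:ℝ)^(-(1:ℝ)/4))^3 * (M:ℝ)^((3:ℝ)/4) = 1 := by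
          rw [← Real.rpow_natCast ((M:ℝ)^(-(1:ℝ)/4)) 3, ← Real.rpow_mul hM0.le,
            ← Real.rpow_add hM0]
          norm_num
        have e3 : (t^(-(3:ℝ)/8))^3 * t^((9:ℝ)/8) = 1 := by
          rw [← Real.rpow_natCast (t^(-(3:ℝ)/8)) 3, ← Real.rpow_mul ht0.le,
            ← Real.rpow_add ht0]
          norm_num
        calc (36*(B+1) * (M:ℝ)^(-(1:ℝ)/4) * t^(-(3:ℝ)/8))^3 * ((M:ℝ)^((3:ℝ)/4) * t^((9:ℝ)/8))
            = (36*(B+1))^3 * ((((M:ℝ)^(-(1:ℝ)/4))^3 * (M:ℝ)^((3:ℝ)/4)) *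
                ((t^(-(3:ℝ)/8))^3 * t^((9:ℝ)/8))) := by ring
          _ = (36*(B+1))^3 := by rw [e2, e3]; ring
      rw [hR]
      have e1 : (M:ℝ)^((3:ℝ)/2) * (M:ℝ)^((3:ℝ)/4) = ((M:ℝ)^((3:ℝ)/4))^3 := by
        rw [← Real.rpow_natCast ((M:ℝ)^((3:ℝ)/4)) 3, ← Real.rpow_mul hM0.le,
          ← Real.rpow_add hM0]
        norm_num
      have e4 : t^((9:ℝ)/8) = (t^((3:ℝ)/8))^3 := by
        rw [← Real.rpow_natCast (t^((3:ℝ)/8)) 3, ← Real.rpow_mul ht0.le]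
        norm_num
      have hkey3 : (t^((3:ℝ)/8) * (M:ℝ)^((3:ℝ)/4) * E)^3 ≤ 64 := by
        calc (t^((3:ℝ)/8) * (M:ℝ)^((3:ℝ)/4) * E)^3 ≤ 4^3 :=
          pow_le_pow_left₀ (by positivity) hkey 3
        _ = 64 := by norm_num
      calc 729 * B^3 * (M:ℝ)^((3:ℝ)/2) * E^3 * ((M:ℝ)^((3:ℝ)/4) * t^((9:ℝ)/8))
          = 729 * B^3 * (((M:ℝ)^((3:ℝ)/2) * (M:ℝ)^((3:ℝ)/4)) * t^((9:ℝ)/8) * E^3) := by ring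
        _ = 729 * B^3 * ((t^((3:ℝ)/8) * (M:ℝ)^((3:ℝ)/4) * E)^3) := by rw [e1, e4]; ring
        _ ≤ 729 * B^3 * 64 := by nlinarith [hkey3, pow_nonneg hBnn 3]
        _ ≤ (36*(B+1))^3 := by nlinarith [hBnn, sq_nonneg B]
    have hintle : ∫ x, |heatfM φ M t x| ^ 3 ∂torusMeasure ≤ D^3 :=
      hcube.trans ((mul_le_mul_of_nonneg_left hL2le hK0).trans (h1.le.trans hfinal))
    have hI0 : 0 ≤ ∫ x, |heatfM φ M t x| ^ 3 ∂torusMeasure :=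
      integral_nonneg fun x => by positivity
    have h13 := Real.rpow_le_rpow hI0 hintle (by norm_num : (0:ℝ) ≤ 1/3)
    have hD3 : (D^3 : ℝ)^((1:ℝ)/3) = D := by
      rw [← Real.rpow_natCast D 3, ← Real.rpow_mul hD0]
      norm_num
    rw [hD3] at h13
    calc t^((3:ℝ)/8) * (∫ x, |heatfM φ M t x| ^ 3 ∂torusMeasure) ^ ((1:ℝ)/3)
        ≤ t^((3:ℝ)/8) * D := mul_le_mul_of_nonneg_left h13 (Real.rpow_nonneg ht0.le _)
      _ = 36*(B+1) * (M:ℝ)^(-(1:ℝ)/4) * (t^((3:ℝ)/8) * t^(-(3:ℝ)/8)) := by rw [hD]; ring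
      _ = 36*(B+1) * (M:ℝ)^(-(1:ℝ)/4) := by
          rw [← Real.rpow_add ht0]
          norm_num
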